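/- arXiv:2308.13513 — 2 statements merged into one kernel-verified Lean document; each statement's English description precedes it below -/
import Mathlib

section
/- Let n, p, q, k, μ be real numbers with n > 0, p > 0, q > 0, k > 0 and μ ≠ 0. Define PL = (k/2)·μ², PL' = (k/2)·μ² · n(p+q)(np − nq + 1)² / (1 + n(p+q)), ΔPL = PL' − PL, and structural bias B = (p − q)/(p + q). If B > ( √(n²(p+q)² + n(p+q)) − n(p+q) ) / ( n²(p+q)² ), then ΔPL > 0. -/
/-!
Writing `s = n(p+q)`, the numerator `np − nq + 1` equals `sB + 1`, so `PL' = PL · s(sB+1)²/(1+s)`.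
The threshold on `B` is exactly the condition `√(s² + s) < s(sB + 1)`; squaring gives
`s(sB+1)² > 1 + s`, i.e. message passing multiplies the leakage by a factor larger than one.
-/

/-- The factor by which one message passing step multiplies the privacy leakage, in terms of
`s = n(p+q)` and `x = np − nq + 1`. -/
noncomputable def leakageGain (s x : ℝ) : ℝ := s * x ^ 2 / (1 + s)

lemma sqrt_lt_mul_of_gt_threshold {s b : ℝ} (hs : 0 < s)
    (hb : b > (Real.sqrt (s ^ 2 + s) - s) / s ^ 2) :
    Real.sqrt (s ^ 2 + s) < s * (s * b + 1) := by
  have := (div_lt_iff₀ (by positivity)).mp hb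
  nlinarith

lemma one_lt_leakageGain_of_sqrt_lt {s x : ℝ} (hs : 0 < s)
    (h : Real.sqrt (s ^ 2 + s) < s * x) : 1 < leakageGain s x := by
  have hsq : s ^ 2 + s < (s * x) ^ 2 :=
    (Real.sqrt_lt' ((Real.sqrt_nonneg _).trans_lt h)).mp h
  have hgain : 1 + s < s * x ^ 2 := by nlinarith
  exact (one_lt_div (by positivity)).mpr hgain

lemma sub_pos_of_one_lt_gain {a g : ℝ} (ha : 0 < a) (hg : 1 < g) : 0 < a * g - a := by
  nlinarith

lemma mul_sub_add_one_eq_mul_bias_add_one {n p q : ℝ} (hpq : p + q ≠ 0) :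
    n * p - n * q + 1 = n * (p + q) * ((p - q) / (p + q)) + 1 := by
  field_simp

/-- Proposition 1(1): if the structural bias `B = (p−q)/(p+q)` exceeds the
threshold `(√(n²(p+q)²+n(p+q)) − n(p+q))/(n²(p+q)²)`, then the change in
privacy leakage after one GCN-like message passing step is positive. -/
theorem privacy_leakage_amplified_of_bias_gt_threshold
    (n p q k μ : ℝ) (hn : 0 < n) (hp : 0 < p) (hq : 0 < q) (hk : 0 < k)
    (hμ : μ ≠ 0)
    (PL PL' ΔPL B : ℝ)
    (hPL : PL = (k / 2) * μ ^ 2)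
    (hPL' : PL' = (k / 2) * μ ^ 2 *
        (n * (p + q) * (n * p - n * q + 1) ^ 2 / (1 + n * (p + q))))
    (hΔ : ΔPL = PL' - PL)
    (hB : B = (p - q) / (p + q))
    (hgt : B > (Real.sqrt (n ^ 2 * (p + q) ^ 2 + n * (p + q)) - n * (p + q)) /
        (n ^ 2 * (p + q) ^ 2)) :
    ΔPL > 0 := by
  have hpq : 0 < p + q := add_pos hp hq
  have hs : 0 < n * (p + q) := mul_pos hn hpq
  rw [← mul_pow] at hgt
  have hgain : 1 < leakageGain (n * (p + q)) (n * p - n * q + 1) := by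
    rw [mul_sub_add_one_eq_mul_bias_add_one hpq.ne', ← hB]
    exact one_lt_leakageGain_of_sqrt_lt hs (sqrt_lt_mul_of_gt_threshold hs hgt)
  rw [hΔ, hPL', hPL]
  exact sub_pos_of_one_lt_gain (by positivity) hgain
end

section
/- Let n, p, q, k, μ be real numbers with n > 0, p > 0, q > 0, p ≥ q, k > 0 and μ ≠ 0. Define PL = (k/2)·μ², PL' = (k/2)·μ² · n(p+q)(np − nq + 1)² / (1 + n(p+q)), ΔPL = PL' − PL, and B = (p − q)/(p + q). Then ΔPL > 0 if and only if B > ( √(n²(p+q)² + n(p+q)) − n(p+q) ) / ( n²(p+q)² ). -/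
/-!
Write `s = n(p+q)` and `d = n(p-q)`, so that `B = d / s`. Both sides of the equivalence reduce
to the same inequality `1 + s < s (d + 1)²`: the left one after cancelling the positive factor
`(k/2) μ²`, the right one after clearing denominators and squaring `√(s² + s) < s (d + 1)`,
which is legitimate because `d ≥ 0` makes the right-hand side positive.
-/

theorem mul_div_one_add_sub_pos_iff {C s t : ℝ} (hC : 0 < C) (hs : 0 < 1 + s) :
    0 < C * (s * t ^ 2 / (1 + s)) - C ↔ 1 + s < s * t ^ 2 := by
  rw [sub_pos, lt_mul_iff_one_lt_right hC, one_lt_div hs]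

theorem sqrt_sq_add_sub_div_sq_lt_div_iff {s d : ℝ} (hs : 0 < s) (hd : 0 < d + 1) :
    (√(s ^ 2 + s) - s) / s ^ 2 < d / s ↔ 1 + s < s * (d + 1) ^ 2 := by
  have hds : 0 < (d + 1) * s := mul_pos hd hs
  calc (√(s ^ 2 + s) - s) / s ^ 2 < d / s
      ↔ √(s ^ 2 + s) < (d + 1) * s := by
        rw [div_lt_div_iff₀ (by positivity) hs, sq, ← mul_assoc, mul_lt_mul_iff_left₀ hs]
        constructor <;> intro h <;> linarith
    _ ↔ s * (1 + s) < s * (s * (d + 1) ^ 2) := by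
        rw [Real.sqrt_lt' hds]
        constructor <;> intro h <;> linarith
    _ ↔ 1 + s < s * (d + 1) ^ 2 := mul_lt_mul_iff_right₀ hs

theorem deltaPL_pos_iff_bias_gt_threshold_general
    (n p q k μ : ℝ) (hn : 0 < n) (hq : 0 < q) (hpq : q ≤ p)
    (hk : 0 < k) (hμ : μ ≠ 0)
    (PL PL' ΔPL B : ℝ)
    (hPL : PL = (k / 2) * μ ^ 2)
    (hPL' : PL' = (k / 2) * μ ^ 2 *
        (n * (p + q) * (n * p - n * q + 1) ^ 2 / (1 + n * (p + q))))
    (hΔ : ΔPL = PL' - PL)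
    (hB : B = (p - q) / (p + q)) :
    ΔPL > 0 ↔
      B > (Real.sqrt (n ^ 2 * (p + q) ^ 2 + n * (p + q)) - n * (p + q)) /
        (n ^ 2 * (p + q) ^ 2) := by
  subst hPL hPL' hΔ hB
  set s := n * (p + q)
  set d := n * p - n * q
  have hs : 0 < s := mul_pos hn (by linarith)
  have hd : 0 ≤ d := by nlinarith
  have hB : (p - q) / (p + q) = d / s := by
    rw [← mul_div_mul_left _ _ hn.ne', mul_sub]
  rw [show n ^ 2 * (p + q) ^ 2 = s ^ 2 by ring, hB, gt_iff_lt, gt_iff_lt,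
    mul_div_one_add_sub_pos_iff (by positivity) (by linarith),
    sqrt_sq_add_sub_div_sq_lt_div_iff hs (by linarith)]

/-- Two-sided form of Proposition 1(1): `ΔPL > 0` iff the structural bias `B`
exceeds the threshold `(√(n²(p+q)²+n(p+q)) − n(p+q))/(n²(p+q)²)`. -/
theorem deltaPL_pos_iff_bias_gt_threshold
    (n p q k μ : ℝ) (hn : 0 < n) (hp : 0 < p) (hq : 0 < q) (hpq : q ≤ p)
    (hk : 0 < k) (hμ : μ ≠ 0)
    (PL PL' ΔPL B : ℝ)
    (hPL : PL = (k / 2) * μ ^ 2)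
    (hPL' : PL' = (k / 2) * μ ^ 2 *
        (n * (p + q) * (n * p - n * q + 1) ^ 2 / (1 + n * (p + q))))
    (hΔ : ΔPL = PL' - PL)
    (hB : B = (p - q) / (p + q)) :
    ΔPL > 0 ↔
      B > (Real.sqrt (n ^ 2 * (p + q) ^ 2 + n * (p + q)) - n * (p + q)) /
        (n ^ 2 * (p + q) ^ 2) :=
  deltaPL_pos_iff_bias_gt_threshold_general n p q k μ hn hq hpq hk hμ PL PL' ΔPL B hPL hPL' hΔ hB
end
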